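/- arXiv:1201.3987 — 3 statements merged into one kernel-verified Lean document; each statement's English description precedes it below -/
import Mathlib

section
/- In a dendroidally ordered set A, if a₁ and a₂ are ≤_d-incomparable and both a₁ ≤_d b and a₂ ≤_d b, then there exists c ∈ A⁺ with a₁ and a₂ both occurring in c and c ≤ b. -/
/-- A (commutative) broad poset: a set `A` with a relation between the free
commutative monoid on `A` (modelled as `Multiset A`) and `A`, satisfying
broad reflexivity, transitivity and antisymmetry. -/
structure BroadPoset (A : Type) where
  le : Multiset A → A → Prop
  le_refl : ∀ a : A, le {a} a
  le_trans : ∀ (a : A) (l : List (Multiset A × A)),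
      le (↑(l.map Prod.snd) : Multiset A) a → (∀ p ∈ l, le p.1 p.2) →
      le (l.map Prod.fst).sum a
  le_antisymm : ∀ a a' : A, le {a} a' → le {a'} a → a = a'

/-- The descendance relation: `b ≤_d a` iff `b` occurs in some `b' ≤ a`. -/
def BroadPoset.descLe {A : Type} (P : BroadPoset A) (b a : A) : Prop :=
  ∃ b' : Multiset A, P.le b' a ∧ b ∈ b'

/-- Strict broad inequality `b < a`. -/
def BroadPoset.blt {A : Type} (P : BroadPoset A) (b : Multiset A) (a : A) : Prop :=
  P.le b a ∧ b ≠ {a}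

/-- The induced order on `A⁺`: `s ≤ t` iff `t = t₁·…·tₙ` and `s = s₁·…·sₙ`
with `sᵢ ≤ tᵢ` for each `i`. -/
def BroadPoset.multLe {A : Type} (P : BroadPoset A) (s t : Multiset A) : Prop :=
  ∃ l : List (Multiset A × A), (↑(l.map Prod.snd) : Multiset A) = t ∧
    (l.map Prod.fst).sum = s ∧ ∀ p ∈ l, P.le p.1 p.2

/-- A leaf: an element with `ĥa = ∅`. -/
def BroadPoset.IsLeaf {A : Type} (P : BroadPoset A) (a : A) : Prop :=
  ∀ b : Multiset A, ¬ P.blt b a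

/-- `u` is the maximum of `ĥa = {b | b < a}`, i.e. `u = a↑`; its members are
the children of `a`. -/
def BroadPoset.IsChildSet {A : Type} (P : BroadPoset A) (a : A) (u : Multiset A) : Prop :=
  P.blt u a ∧ ∀ b : Multiset A, P.blt b a → P.multLe b u

/-- `r` is the root: every element is a descendant of `r` (extremum of `≤_d`). -/
def BroadPoset.IsRoot {A : Type} (P : BroadPoset A) (r : A) : Prop :=
  ∀ a : A, P.descLe a r

/-- Monotone functions between broad posets. -/
def IsMonotone {A B : Type} (P : BroadPoset A) (Q : BroadPoset B) (f : A → B) : Prop :=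
  ∀ (b : Multiset A) (a : A), P.le b a → Q.le (b.map f) (f a)

/-- A link: `b < a` such that `b ≤ b' < a` implies `b = b'`. -/
def BroadPoset.IsLink {A : Type} (P : BroadPoset A) (b : Multiset A) (a : A) : Prop :=
  P.blt b a ∧ ∀ b' : Multiset A, P.multLe b b' → P.blt b' a → b = b'

/-- A dendroidally ordered set: a finite broad poset which is simple, has a
root, and in which every non-leaf has children. -/
structure BroadPoset.IsDendroidal {A : Type} (P : BroadPoset A) : Prop where
  finite : Set.Finite {p : Multiset A × A | P.le p.1 p.2}
  simple : ∀ (b : Multiset A) (a : A), P.le b a → b.Nodup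
  root : ∃ r : A, P.IsRoot r
  children : ∀ a : A, ¬ P.IsLeaf a → ∃ u : Multiset A, P.IsChildSet a u

/-!
Induct on `b` along strict descendance `<_d`, which is well founded since `A` is finite and
simplicity makes `≤_d` antisymmetric. Incomparability forces `a₁, a₂ ≠ b`, so both lie below
children `x₁, x₂` of `b`. If `x₁ = x₂`, induction gives a tuple `c ≤ x₁` containing both, and
grafting `c` onto the child set of `b` gives the required tuple. Otherwise graft the tuples
witnessing `a₁ ≤_d x₁` and `a₂ ≤_d x₂` onto the child set at the two different places.
-/

namespace BroadPoset

variable {A : Type} (P : BroadPoset A)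

def IsSimple : Prop :=
  ∀ (b : Multiset A) (a : A), P.le b a → b.Nodup

def descLt (x y : A) : Prop :=
  P.descLe x y ∧ x ≠ y

variable {P}

lemma finite_of_finite_le (h : Set.Finite {p : Multiset A × A | P.le p.1 p.2}) : Finite A :=
  have : Finite {p : Multiset A × A // P.le p.1 p.2} := h.to_subtype
  Finite.of_injective (fun a => (⟨({a}, a), P.le_refl a⟩ : {p : Multiset A × A // P.le p.1 p.2}))
    fun a b hab => by simpa using congrArg (fun p => p.1.2) hab

/-- Grafting `c ≤ x` onto an occurrence of `x` in `u ≤ b`. -/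
lemma le_add_erase [DecidableEq A] {c u : Multiset A} {x b : A} (hc : P.le c x) (hx : x ∈ u)
    (hu : P.le u b) : P.le (c + u.erase x) b := by
  have key := P.le_trans b ((c, x) :: (u.erase x).toList.map fun y => ({y}, y))
  have hsum : ((u.erase x).toList.map fun y => ({y} : Multiset A)).sum = u.erase x := by
    rw [← Multiset.sum_coe, ← Multiset.map_coe, Multiset.coe_toList, Multiset.sum_map_singleton]
  simp only [List.map_cons, List.map_map, List.sum_cons, List.mem_cons, List.mem_map,
    forall_eq_or_imp, Function.comp_def, List.map_id', hsum] at key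
  refine key ?_ ⟨hc, ?_⟩
  · rwa [← Multiset.cons_coe, Multiset.coe_toList, Multiset.cons_erase hx]
  · rintro _ ⟨y, -, rfl⟩
    exact P.le_refl y

lemma descLe_trans {a x y : A} (hax : P.descLe a x) (hxy : P.descLe x y) : P.descLe a y := by
  classical
  obtain ⟨c, hc, hac⟩ := hax
  obtain ⟨d, hd, hxd⟩ := hxy
  exact ⟨c + d.erase x, le_add_erase hc hxd hd, Multiset.mem_add.2 (.inl hac)⟩

/-- Grafting `c ≤ b` onto a second occurrence of `b` would give a tuple `≤ b` with a repeated
element. -/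
lemma IsSimple.eq_singleton_of_mem (hs : P.IsSimple) {c : Multiset A} {b : A} (hc : P.le c b)
    (hb : b ∈ c) : c = {b} := by
  classical
  obtain ⟨d, rfl⟩ := Multiset.exists_cons_of_mem hb
  suffices d = 0 by rw [this]; rfl
  have hnd := hs _ _ (le_add_erase hc hb hc)
  rw [Multiset.erase_cons_head, Multiset.nodup_add] at hnd
  exact Multiset.eq_zero_of_forall_notMem fun y hy =>
    Multiset.disjoint_left.1 hnd.2.2 (Multiset.mem_cons_of_mem hy) hy

lemma IsSimple.descLe_antisymm (hs : P.IsSimple) {a b : A} (hab : P.descLe a b)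
    (hba : P.descLe b a) : a = b := by
  classical
  obtain ⟨c, hc, hac⟩ := hab
  obtain ⟨d, hd, hbd⟩ := hba
  have hdc : d + c.erase a = {b} :=
    hs.eq_singleton_of_mem (le_add_erase hd hac hc) (Multiset.mem_add.2 (.inl hbd))
  obtain ⟨d, rfl⟩ := Multiset.exists_cons_of_mem hbd
  obtain ⟨hd0, hc0⟩ : d = 0 ∧ c.erase a = 0 :=
    add_eq_zero.1 ((Multiset.cons_inj_right b).1 (by rw [← Multiset.cons_add, hdc]; rfl))
  have hca : c = {a} := by rw [← Multiset.cons_erase hac, hc0]; rfl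
  exact P.le_antisymm a b (hca ▸ hc) (by rwa [hd0] at hd)

lemma IsSimple.wellFounded_descLt [Finite A] (hs : P.IsSimple) : WellFounded P.descLt :=
  have : IsTrans A P.descLt := ⟨fun x y z hxy hyz =>
    ⟨descLe_trans hxy.1 hyz.1, by
      rintro rfl
      exact hxy.2 (hs.descLe_antisymm hxy.1 hyz.1)⟩⟩
  have : Std.Irrefl P.descLt := ⟨fun x hx => hx.2 rfl⟩
  Finite.wellFounded_of_trans_of_irrefl _

lemma exists_blt_of_descLe {a b : A} (h : P.descLe a b) (hne : a ≠ b) :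
    ∃ c, P.blt c b ∧ a ∈ c := by
  obtain ⟨c, hc, hac⟩ := h
  exact ⟨c, ⟨hc, by rintro rfl; exact hne (Multiset.mem_singleton.1 hac)⟩, hac⟩

lemma exists_mem_descLe_of_multLe {s u : Multiset A} {a : A} (h : P.multLe s u) (ha : a ∈ s) :
    ∃ x ∈ u, P.descLe a x := by
  obtain ⟨l, rfl, rfl, hl⟩ := h
  rw [← Multiset.sum_coe] at ha
  obtain ⟨_, hm, ham⟩ := Multiset.mem_join.1 ha
  obtain ⟨p, hp, rfl⟩ := List.mem_map.1 (Multiset.mem_coe.1 hm)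
  exact ⟨p.2, Multiset.mem_coe.2 (List.mem_map_of_mem hp), p.1, hl p hp, ham⟩

lemma IsChildSet.exists_mem_descLe {b : A} {u c : Multiset A} {a : A} (hu : P.IsChildSet b u)
    (hc : P.blt c b) (ha : a ∈ c) : ∃ x ∈ u, P.descLe a x :=
  exists_mem_descLe_of_multLe (hu.2 c hc) ha

lemma IsChildSet.descLt_of_mem (hs : P.IsSimple) {b x : A} {u : Multiset A}
    (hu : P.IsChildSet b u) (hx : x ∈ u) : P.descLt x b :=
  ⟨⟨u, hu.1.1, hx⟩, by
    rintro rfl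
    exact hu.1.2 (hs.eq_singleton_of_mem hu.1.1 hx)⟩

theorem exists_common_tuple_of_incomparable [Finite A] (hs : P.IsSimple)
    (hch : ∀ a, ¬ P.IsLeaf a → ∃ u, P.IsChildSet a u) {a₁ a₂ : A}
    (h₁ : ¬ P.descLe a₁ a₂) (h₂ : ¬ P.descLe a₂ a₁) (b : A) (hb₁ : P.descLe a₁ b)
    (hb₂ : P.descLe a₂ b) : ∃ c : Multiset A, a₁ ∈ c ∧ a₂ ∈ c ∧ P.le c b := by
  classical
  induction b using hs.wellFounded_descLt.induction with
  | _ b ih =>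
  obtain ⟨c₁, hc₁, ha₁⟩ := exists_blt_of_descLe hb₁ (by rintro rfl; exact h₂ hb₂)
  obtain ⟨c₂, hc₂, ha₂⟩ := exists_blt_of_descLe hb₂ (by rintro rfl; exact h₁ hb₁)
  obtain ⟨u, hu⟩ := hch b fun hleaf => hleaf c₁ hc₁
  obtain ⟨x₁, hx₁u, hx₁⟩ := hu.exists_mem_descLe hc₁ ha₁
  obtain ⟨x₂, hx₂u, hx₂⟩ := hu.exists_mem_descLe hc₂ ha₂
  by_cases hx : x₁ = x₂
  · subst hx
    obtain ⟨c, h₁c, h₂c, hc⟩ := ih x₁ (hu.descLt_of_mem hs hx₁u) hx₁ hx₂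
    exact ⟨c + u.erase x₁, Multiset.mem_add.2 (.inl h₁c), Multiset.mem_add.2 (.inl h₂c),
      le_add_erase hc hx₁u hu.1.1⟩
  · obtain ⟨d₁, hd₁, ha₁d₁⟩ := hx₁
    obtain ⟨d₂, hd₂, ha₂d₂⟩ := hx₂
    have hx₂u' : x₂ ∈ u.erase x₁ := (Multiset.mem_erase_of_ne (Ne.symm hx)).2 hx₂u
    have hle := le_add_erase hd₂ (Multiset.mem_add.2 (.inr hx₂u'))
      (le_add_erase hd₁ hx₁u hu.1.1)
    rw [Multiset.erase_add_right_pos _ hx₂u'] at hle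
    exact ⟨_, Multiset.mem_add.2 (.inr (Multiset.mem_add.2 (.inl ha₁d₁))),
      Multiset.mem_add.2 (.inl ha₂d₂), hle⟩

end BroadPoset

/-- In a dendroidally ordered set, two `≤_d`-incomparable common descendants
of `b` occur together in a single `c ∈ A⁺` with `c ≤ b`. -/
theorem incomparable_common_tuple {A : Type} (P : BroadPoset A) (hP : P.IsDendroidal)
    (a₁ a₂ b : A) (h₁ : ¬ P.descLe a₁ a₂) (h₂ : ¬ P.descLe a₂ a₁)
    (hb₁ : P.descLe a₁ b) (hb₂ : P.descLe a₂ b) :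
    ∃ c : Multiset A, a₁ ∈ c ∧ a₂ ∈ c ∧ P.le c b :=
  have : Finite A := BroadPoset.finite_of_finite_le hP.finite
  BroadPoset.exists_common_tuple_of_incomparable hP.simple hP.children h₁ h₂ b hb₁ hb₂
end

section
/- For a dendroidally ordered set A and a ∈ A, the subset A_a = {a' ∈ A : a' ≤_d a} with the induced broad relation is dendroidally ordered, with root a. -/
/-!
Everything about the induced structure on a set `S` closed under descendants is computed in
`A`: a child set `u` of `x ∈ S`, and every factorisation `b ≤ u`, only involve descendants of
`x`, so they lie in `S`. Transitivity of `≤_d` makes `{x | x ≤_d a}` such a set, with root `a`.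
-/

namespace BroadPoset

variable {A : Type} (P : BroadPoset A)

theorem descLe_of_le_of_mem {b : Multiset A} {x y : A} (h : P.le b y) (hx : x ∈ b) :
    P.descLe x y :=
  ⟨b, h, hx⟩

/-- Graft `b' ≤ x` onto the occurrence of `x` in `c ≤ a`, padding the other members of `c`
with reflexivity. -/
theorem descLe_trans_s15 {b x a : A} (hbx : P.descLe b x) (hxa : P.descLe x a) : P.descLe b a := by
  obtain ⟨b', hb', hb⟩ := hbx
  obtain ⟨c, hc, hx⟩ := hxa
  obtain ⟨c, rfl⟩ := Multiset.exists_cons_of_mem hx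
  let l : List (Multiset A × A) := (b', x) :: c.toList.map fun y => ({y}, y)
  have hsnd : (↑(l.map Prod.snd) : Multiset A) = x ::ₘ c := by
    simp [l, Function.comp_def, ← Multiset.cons_coe]
  have hle : P.le (l.map Prod.fst).sum a := by
    refine P.le_trans a l (hsnd ▸ hc) fun p hp => ?_
    rcases List.mem_cons.1 hp with rfl | hp
    · exact hb'
    · obtain ⟨y, -, rfl⟩ := List.mem_map.1 hp
      exact P.le_refl y
  exact ⟨_, hle, by simp [l, hb]⟩

def induced (S : Set A) : BroadPoset S where
  le s x := P.le (s.map Subtype.val) x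
  le_refl x := by simpa using P.le_refl x.val
  le_trans x l hl hle := by
    let f := Prod.map (Multiset.map ((↑) : S → A)) ((↑) : S → A)
    have hsnd : (↑((l.map f).map Prod.snd) : Multiset A) =
        (↑(l.map Prod.snd) : Multiset S).map Subtype.val := by
      simp [f, Function.comp_def]
    have hfst : ((l.map f).map Prod.fst).sum = ((l.map Prod.fst).sum).map Subtype.val := by
      rw [← Multiset.coe_mapAddMonoidHom, map_list_sum]
      simp [f, Function.comp_def]
    have key := P.le_trans x (l.map f) (hsnd ▸ hl) fun p hp => by
      obtain ⟨q, hq, rfl⟩ := List.mem_map.1 hp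
      exact hle q hq
    exact hfst ▸ key
  le_antisymm x y hxy hyx :=
    Subtype.ext (P.le_antisymm x y (by simpa using hxy) (by simpa using hyx))

def IsDescClosed (S : Set A) : Prop :=
  ∀ ⦃x y : A⦄, y ∈ S → P.descLe x y → x ∈ S

variable {P} {S : Set A}

theorem induced_le_iff {s : Multiset S} {x : S} :
    (P.induced S).le s x ↔ P.le (s.map Subtype.val) x :=
  Iff.rfl

theorem induced_blt_iff {s : Multiset S} {x : S} :
    (P.induced S).blt s x ↔ P.blt (s.map Subtype.val) x := by
  rw [blt, blt, induced_le_iff, ← Multiset.map_singleton Subtype.val,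
    (Multiset.map_injective Subtype.val_injective).ne_iff]

theorem not_isLeaf_of_not_isLeaf_induced {x : S} (h : ¬ (P.induced S).IsLeaf x) :
    ¬ P.IsLeaf x := by
  simp only [IsLeaf, not_forall, not_not] at h ⊢
  obtain ⟨b, hb⟩ := h
  exact ⟨_, induced_blt_iff.1 hb⟩

theorem multLe_induced (hS : P.IsDescClosed S) {s t : Multiset S}
    (h : P.multLe (s.map Subtype.val) (t.map Subtype.val)) : (P.induced S).multLe s t := by
  obtain ⟨l, hsnd, hfst, hle⟩ := h
  have hl : ∀ p ∈ l, (∀ z ∈ p.1, z ∈ S) ∧ p.2 ∈ S := fun p hp => by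
    have hp2 : p.2 ∈ S := by
      have : p.2 ∈ (↑(l.map Prod.snd) : Multiset A) :=
        Multiset.mem_coe.2 (List.mem_map_of_mem hp)
      rw [hsnd] at this
      obtain ⟨y, -, hy⟩ := Multiset.mem_map.1 this
      exact hy ▸ y.2
    exact ⟨fun z hz => hS hp2 (P.descLe_of_le_of_mem (hle p hp) hz), hp2⟩
  lift l to List (Multiset S × S) using hl
  refine ⟨l, ?_, ?_, ?_⟩
  · apply Multiset.map_injective Subtype.val_injective
    simpa [Function.comp_def] using hsnd
  · apply Multiset.map_injective Subtype.val_injective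
    rw [← Multiset.coe_mapAddMonoidHom, map_list_sum]
    simpa [Function.comp_def] using hfst
  · exact fun p hp => hle _ (List.mem_map_of_mem hp)

theorem IsChildSet.induced (hS : P.IsDescClosed S) {x : S} {u : Multiset S}
    (hu : P.IsChildSet x (u.map Subtype.val)) : (P.induced S).IsChildSet x u :=
  ⟨induced_blt_iff.2 hu.1, fun _ hb => multLe_induced hS (hu.2 _ (induced_blt_iff.1 hb))⟩

theorem isRoot_induced (hS : P.IsDescClosed S) {r : S} (hr : ∀ y ∈ S, P.descLe y r) :
    (P.induced S).IsRoot r := by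
  intro y
  obtain ⟨b, hb, hy⟩ := hr y y.2
  lift b to Multiset S using fun z hz => hS r.2 (P.descLe_of_le_of_mem hb hz)
  exact ⟨b, hb, (Multiset.mem_map_of_injective Subtype.val_injective).1 hy⟩

theorem IsDendroidal.induced (hP : P.IsDendroidal) (hS : P.IsDescClosed S) {r : S}
    (hr : (P.induced S).IsRoot r) : (P.induced S).IsDendroidal where
  finite := hP.finite.preimage
    ((Multiset.map_injective Subtype.val_injective).prodMap Subtype.val_injective).injOn
  simple _ _ h := (hP.simple _ _ h).of_map _
  root := ⟨r, hr⟩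
  children x hx := by
    obtain ⟨u, hu⟩ := hP.children x (not_isLeaf_of_not_isLeaf_induced hx)
    lift u to Multiset S using fun z hz => hS x.2 (P.descLe_of_le_of_mem hu.1.1 hz)
    exact ⟨u, hu.induced hS⟩

theorem isDescClosed_setOf_descLe (a : A) : P.IsDescClosed {x | P.descLe x a} :=
  fun _ _ hy hxy => P.descLe_trans_s15 hxy hy

end BroadPoset

/-- For a dendroidally ordered set `A` and `a ∈ A`, the subset
`A_a = {a' | a' ≤_d a}` with the induced broad relation is dendroidally
ordered, with root `a`. -/
theorem subtree_dendroidal {A : Type} (P : BroadPoset A) (hP : P.IsDendroidal) (a : A) :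
    ∃ Q : BroadPoset {x : A // P.descLe x a},
      Q.le = (fun (s : Multiset {x : A // P.descLe x a}) (x : {x : A // P.descLe x a}) =>
        P.le (s.map Subtype.val) x.val) ∧
      Q.IsDendroidal ∧
      Q.IsRoot ⟨a, ⟨{a}, P.le_refl a, Multiset.mem_singleton_self a⟩⟩ := by
  have hS := P.isDescClosed_setOf_descLe a
  have hroot := BroadPoset.isRoot_induced hS
    (r := ⟨a, {a}, P.le_refl a, Multiset.mem_singleton_self a⟩) fun _ hy => hy
  exact ⟨P.induced {x | P.descLe x a}, rfl, hP.induced hS hroot, hroot⟩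
end

section
/- If A is a dendroidally ordered set with root r and r↑ = a₁·…·aₙ, then A ∩-decomposes as A_root ∪ A_{a₁} ∪ ⋯ ∪ A_{aₙ}, with A_{aᵢ} ∩ A_root = {aᵢ} for each i, and every element of A not in A_root lies in exactly one A_{aᵢ}. -/
/-!
Every `x` descends from the root through some `b ≤ r`: either `b = {r}`, or `b < r`, and then
`b ≤ r↑` by maximality, so `x` descends from a child. Uniqueness comes from simplicity:
grafting witnesses `b ≤ aᵢ`, `c ≤ aⱼ` (`i ≠ j`) of `x ≤_d aᵢ`, `x ≤_d aⱼ` into `r↑ ≤ r`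
gives a broad relation over `r` containing `x` twice. In the same way, grafting a witness of
`r ≤_d aᵢ` into `r↑ ≤ r` forces `r↑ = {r}`.
-/

namespace BroadPoset

variable {A : Type} (P : BroadPoset A)

theorem descLe_refl (a : A) : P.descLe a a :=
  ⟨{a}, P.le_refl a, Multiset.mem_singleton_self a⟩

theorem multLe_zero : P.multLe 0 0 :=
  ⟨[], rfl, rfl, by simp⟩

theorem multLe_singleton {b : Multiset A} {a : A} (h : P.le b a) : P.multLe b {a} :=
  ⟨[(b, a)], rfl, by simp, by simpa using h⟩

theorem multLe_add {s t s' t' : Multiset A} (h : P.multLe s t) (h' : P.multLe s' t') :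
    P.multLe (s + s') (t + t') := by
  obtain ⟨l, rfl, rfl, hl⟩ := h
  obtain ⟨l', rfl, rfl, hl'⟩ := h'
  refine ⟨l ++ l', by simp, by simp, fun p hp => ?_⟩
  rcases List.mem_append.1 hp with hp | hp
  exacts [hl p hp, hl' p hp]

theorem multLe_refl (t : Multiset A) : P.multLe t t := by
  induction t using Multiset.induction_on with
  | empty => exact P.multLe_zero
  | cons a t ih =>
    rw [← Multiset.singleton_add]
    exact P.multLe_add (P.multLe_singleton (P.le_refl a)) ih

theorem le_of_multLe_of_le {s t : Multiset A} {a : A} (hst : P.multLe s t) (ht : P.le t a) :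
    P.le s a := by
  obtain ⟨l, rfl, rfl, hl⟩ := hst
  exact P.le_trans a l ht hl

theorem exists_descLe_of_multLe {s t : Multiset A} {x : A} (hst : P.multLe s t) (hx : x ∈ s) :
    ∃ i ∈ t, P.descLe x i := by
  obtain ⟨l, rfl, rfl, hl⟩ := hst
  rw [← Multiset.sum_coe, ← Multiset.map_coe] at hx
  obtain ⟨b, hb, hxb⟩ := Multiset.mem_join.1 hx
  obtain ⟨p, hp, rfl⟩ := Multiset.mem_map.1 hb
  exact ⟨p.2, Multiset.mem_map_of_mem _ hp, p.1, hl p hp, hxb⟩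

theorem le_graft {b t : Multiset A} {i r : A} (hb : P.le b i) (h : P.le (i ::ₘ t) r) :
    P.le (b + t) r :=
  P.le_of_multLe_of_le (P.multLe_add (P.multLe_singleton hb) (P.multLe_refl t)) h

theorem descLe_eq_or_exists_of_isChildSet {a x : A} {u : Multiset A} (hu : P.IsChildSet a u)
    (hx : P.descLe x a) : x = a ∨ ∃ i ∈ u, P.descLe x i := by
  obtain ⟨b, hb, hxb⟩ := hx
  by_cases hba : b = {a}
  · exact Or.inl (Multiset.mem_singleton.1 (hba ▸ hxb))
  · exact Or.inr (P.exists_descLe_of_multLe (hu.2 b ⟨hb, hba⟩) hxb)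

section Simple

variable {P} (hsimp : ∀ (b : Multiset A) (a : A), P.le b a → b.Nodup)
include hsimp

theorem eq_singleton_of_le_of_mem {c : Multiset A} {r : A} (hc : P.le c r) (hrc : r ∈ c) :
    c = {r} := by
  obtain ⟨t, rfl⟩ := Multiset.exists_cons_of_mem hrc
  have hnd := Multiset.nodup_add.1 (hsimp _ _ (P.le_graft hc hc))
  rw [Multiset.eq_zero_of_forall_notMem fun x hx =>
    Multiset.disjoint_left.1 hnd.2.2 (Multiset.mem_cons_of_mem hx) hx]
  rfl

theorem eq_of_descLe_of_descLe {u : Multiset A} {r i j x : A} (hu : P.le u r) (hi : i ∈ u)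
    (hj : j ∈ u) (hxi : P.descLe x i) (hxj : P.descLe x j) : i = j := by
  by_contra hij
  obtain ⟨b, hbi, hxb⟩ := hxi
  obtain ⟨c, hcj, hxc⟩ := hxj
  obtain ⟨t, rfl⟩ := Multiset.exists_cons_of_mem hi
  obtain ⟨t, rfl⟩ :=
    Multiset.exists_cons_of_mem ((Multiset.mem_cons.1 hj).resolve_left (Ne.symm hij))
  have hc : P.le (c + (i ::ₘ t)) r := P.le_graft hcj (by rwa [Multiset.cons_swap])
  have hbc : P.le (b + (c + t)) r := P.le_graft hbi (by rwa [Multiset.add_cons] at hc)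
  have hnd := Multiset.nodup_add.1 (hsimp _ _ hbc)
  exact Multiset.disjoint_left.1 hnd.2.2 hxb (Multiset.mem_add.2 (Or.inl hxc))

theorem not_descLe_of_blt {u : Multiset A} {r i : A} (hu : P.blt u r) (hi : i ∈ u) :
    ¬ P.descLe r i := by
  rintro ⟨b, hbi, hrb⟩
  obtain ⟨t, rfl⟩ := Multiset.exists_cons_of_mem hi
  have hbt : b + t = {r} :=
    P.eq_singleton_of_le_of_mem hsimp (P.le_graft hbi hu.1) (Multiset.mem_add.2 (Or.inl hrb))
  have hb : b = {r} := (Multiset.le_singleton.1 (hbt ▸ Multiset.le_add_right b t)).resolve_left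
    (by rintro rfl; exact Multiset.notMem_zero r hrb)
  have ht : t = 0 := add_left_cancel (a := b) (by rw [hbt, hb, add_zero])
  subst hb ht
  have hir : i = r := P.le_antisymm i r hu.1 hbi
  exact hu.2 (by rw [hir]; rfl)

end Simple

end BroadPoset

/-- Fundamental decomposition: with root `r` and `r↑ = a₁·…·aₙ`, the set `A`
decomposes as `A_root ∪ A_{a₁} ∪ ⋯ ∪ A_{aₙ}`, with `A_{aᵢ} ∩ A_root = {aᵢ}`,
and every element outside `A_root` lies in exactly one `A_{aᵢ}`. -/
theorem root_decomposition {A : Type} (P : BroadPoset A) (hP : P.IsDendroidal)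
    (r : A) (hr : P.IsRoot r) (u : Multiset A) (hu : P.IsChildSet r u) :
    (∀ x : A, x ∈ (insert r {y : A | y ∈ u} : Set A) ∨ ∃ i, i ∈ u ∧ P.descLe x i) ∧
    (∀ i ∈ u, {x : A | P.descLe x i} ∩ (insert r {y : A | y ∈ u} : Set A) = {i}) ∧
    (∀ x : A, x ∉ (insert r {y : A | y ∈ u} : Set A) →
      ∃! i : A, i ∈ u ∧ P.descLe x i) := by
  have cover (x : A) : x = r ∨ ∃ i ∈ u, P.descLe x i :=
    P.descLe_eq_or_exists_of_isChildSet hu (hr x)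
  have unique {i j x : A} (hi : i ∈ u) (hj : j ∈ u) : P.descLe x i → P.descLe x j → i = j :=
    P.eq_of_descLe_of_descLe hP.simple hu.1.1 hi hj
  refine ⟨fun x => (cover x).imp Or.inl fun ⟨i, hi, h⟩ => ⟨i, hi, h⟩, ?_, ?_⟩
  · intro i hi
    ext x
    simp only [Set.mem_inter_iff, Set.mem_ofPred_eq, Set.mem_insert_iff, Set.mem_singleton_iff]
    constructor
    · rintro ⟨hxi, rfl | hxu⟩
      · exact absurd hxi (P.not_descLe_of_blt hP.simple hu.1 hi)
      · exact unique hxu hi (P.descLe_refl x) hxi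
    · rintro rfl
      exact ⟨P.descLe_refl x, Or.inr hi⟩
  · intro x hx
    obtain rfl | ⟨i, hi, hxi⟩ := cover x
    · exact absurd (Set.mem_insert x _) hx
    · exact ⟨i, ⟨hi, hxi⟩, fun j ⟨hj, hxj⟩ => unique hj hi hxj hxi⟩
end
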